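/- Let 0 < s < 1, λ > 0, let u be a continuous bounded function on ℝ^N with u ≥ 0, u(x₀) = 0 at some point x₀, and suppose (-Δ)^s u + λ u ≥ 0 pointwise at x₀ (with (-Δ)^s u(x₀) defined by the singular integral). If u is not identically zero, then (-Δ)^s u(x₀) + λ u(x₀) < 0, a contradiction; hence either u > 0 everywhere or u ≡ 0. -/

import Mathlib

open MeasureTheory Real

/-!
At a zero `x₀` of `u`, the singular integral defining `(-Δ)^s u(x₀)` is `-∫ u(y) / |x₀ - y|^{N+2s} dy`
and `λ u(x₀) = 0`, so the supersolution inequality forces the integral of the nonnegative integrand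
`u(y) / |x₀ - y|^{N+2s}` to vanish. The integrand is then zero almost everywhere, hence so is `u`,
and a continuous function vanishing almost everywhere for an open-positive measure vanishes.
-/

section

variable {E : Type*} [NormedAddCommGroup E]

lemma eq_zero_of_div_norm_rpow_eq_zero {u : E → ℝ} {x₀ y : E} {p : ℝ} (hx₀ : u x₀ = 0)
    (hy : u y / ‖x₀ - y‖ ^ p = 0) : u y = 0 := by
  rcases div_eq_zero_iff.1 hy with hy | hkernel
  · exact hy
  · -- the kernel only vanishes at `y = x₀`
    rw [rpow_eq_zero_iff_of_nonneg (norm_nonneg _), norm_eq_zero, sub_eq_zero] at hkernel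
    exact hkernel.1 ▸ hx₀

lemma integral_sub_div_norm_rpow_of_eq_zero [MeasurableSpace E] {μ : Measure E} {u : E → ℝ}
    {x₀ : E} {p : ℝ} (hx₀ : u x₀ = 0) :
    ∫ y, (u x₀ - u y) / ‖x₀ - y‖ ^ p ∂μ = -∫ y, u y / ‖x₀ - y‖ ^ p ∂μ := by
  rw [← integral_neg]
  simp only [hx₀, zero_sub, neg_div]

lemma eq_zero_of_integral_div_norm_rpow_nonpos [MeasurableSpace E] {μ : Measure E}
    [μ.IsOpenPosMeasure] {u : E → ℝ} {x₀ : E} {p : ℝ} (huc : Continuous u) (hu0 : ∀ y, 0 ≤ u y)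
    (hx₀ : u x₀ = 0) (hint : Integrable (fun y => u y / ‖x₀ - y‖ ^ p) μ)
    (hle : ∫ y, u y / ‖x₀ - y‖ ^ p ∂μ ≤ 0) : u = 0 := by
  have hnonneg : 0 ≤ fun y => u y / ‖x₀ - y‖ ^ p := fun y =>
    div_nonneg (hu0 y) (rpow_nonneg (norm_nonneg _) _)
  have hae : (fun y => u y / ‖x₀ - y‖ ^ p) =ᵐ[μ] 0 :=
    (integral_eq_zero_iff_of_nonneg hnonneg hint).1 (le_antisymm hle (integral_nonneg hnonneg))
  have hu_ae : u =ᵐ[μ] 0 := hae.mono fun y hy => eq_zero_of_div_norm_rpow_eq_zero hx₀ hy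
  exact (huc.ae_eq_iff_eq μ continuous_const).1 hu_ae

end

theorem stmt_14_general (N : ℕ) (s lam : ℝ)
    (u : EuclideanSpace ℝ (Fin N) → ℝ) (huc : Continuous u)
    (hu0 : ∀ x, 0 ≤ u x)
    (hint : ∀ x : EuclideanSpace ℝ (Fin N), u x = 0 →
      Integrable (fun y : EuclideanSpace ℝ (Fin N) => u y / ‖x - y‖ ^ ((N : ℝ) + 2 * s)))
    (hsuper : ∀ x : EuclideanSpace ℝ (Fin N), u x = 0 →
      0 ≤ (∫ y : EuclideanSpace ℝ (Fin N),
            (u x - u y) / ‖x - y‖ ^ ((N : ℝ) + 2 * s)) + lam * u x) :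
    (∀ x, 0 < u x) ∨ u = 0 := by
  refine or_iff_not_imp_left.2 fun hpos => ?_
  obtain ⟨x₀, hx₀⟩ : ∃ x₀, u x₀ = 0 := by
    obtain ⟨x₀, hle⟩ := not_forall.1 hpos
    exact ⟨x₀, le_antisymm (not_lt.1 hle) (hu0 x₀)⟩
  have hle := hsuper x₀ hx₀
  rw [integral_sub_div_norm_rpow_of_eq_zero hx₀, hx₀, mul_zero, add_zero, neg_nonneg] at hle
  exact eq_zero_of_integral_div_norm_rpow_nonpos huc hu0 hx₀ (hint x₀ hx₀) hle

/-- Strong maximum principle for the fractional Laplacian: a nonnegative bounded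
continuous function satisfying `(-Δ)^s u + λ u ≥ 0` pointwise at each of its zeros
is either everywhere positive or identically zero. -/
theorem stmt_14 (N : ℕ) (s lam : ℝ) (hs0 : 0 < s) (hs1 : s < 1) (hlam : 0 < lam)
    (u : EuclideanSpace ℝ (Fin N) → ℝ) (huc : Continuous u)
    (hub : ∃ M : ℝ, ∀ x, |u x| ≤ M) (hu0 : ∀ x, 0 ≤ u x)
    (hint : ∀ x : EuclideanSpace ℝ (Fin N), u x = 0 →
      Integrable (fun y : EuclideanSpace ℝ (Fin N) => u y / ‖x - y‖ ^ ((N : ℝ) + 2 * s)))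
    (hsuper : ∀ x : EuclideanSpace ℝ (Fin N), u x = 0 →
      0 ≤ (∫ y : EuclideanSpace ℝ (Fin N),
            (u x - u y) / ‖x - y‖ ^ ((N : ℝ) + 2 * s)) + lam * u x) :
    (∀ x, 0 < u x) ∨ u = 0 :=
  stmt_14_general N s lam u huc hu0 hint hsuper
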